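/- arXiv:1604.04424 — 5 statements merged into one kernel-verified Lean document; each statement's English description precedes it below -/
import Mathlib

section
/- Let {a(k)} be a nonnegative real sequence and b, b1, b2, b3, b4 ≥ 0 with a(k+1) ≤ b1·a(k) + b2·∑_{i=1}^{k-1} b^{k-i}·a(i) + b3·b^k + b4 for all k ≥ 1. If 0 < b < 1, (1-b)(1-b1) > b·b2, and b4 = 0, then a(k) → 0 as k → ∞. -/
/-!
With `S k = ∑_{i=1}^{k-1} b^(k-i) a(i)` one has `S (k+1) = b (S k + a k)`, so the pair `(a k, S k)`
is dominated by a linear recursion whose matrix `[[b1, b2], [b, b]]` has spectral radius `< 1`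
because `(1 - b)(1 - b1) > b b2`. Concretely, for `r < 1` close to `1` and `q = b / (r - b)`
both `a k ≤ C r^k` and `S k ≤ q C r^k` propagate by induction, the forcing term `b3 b^k ≤ b3 r^k`
being absorbed by taking `C` large.
-/

open Filter Topology

def discountedSum (b : ℝ) (a : ℕ → ℝ) (k : ℕ) : ℝ :=
  ∑ i ∈ Finset.Ico 1 k, b ^ (k - i) * a i

theorem discountedSum_one (b : ℝ) (a : ℕ → ℝ) : discountedSum b a 1 = 0 := by
  simp [discountedSum]

theorem discountedSum_succ (b : ℝ) (a : ℕ → ℝ) {k : ℕ} (hk : 1 ≤ k) :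
    discountedSum b a (k + 1) = b * (discountedSum b a k + a k) := by
  rw [discountedSum, Finset.sum_Ico_succ_top hk, Nat.add_sub_cancel_left, pow_one, mul_add,
    discountedSum, Finset.mul_sum]
  congr 1
  refine Finset.sum_congr rfl fun i hi => ?_
  rw [Nat.sub_add_comm (Finset.mem_Ico.1 hi).2.le, pow_succ]
  ring

section

variable {a : ℕ → ℝ} {b b1 b2 b3 q r : ℝ}

theorem le_geometric_of_le_discountedSum {C : ℝ} (hb : 0 ≤ b) (hb1 : 0 ≤ b1) (hb2 : 0 ≤ b2)
    (hb3 : 0 ≤ b3) (hq : 0 ≤ q) (hC : 0 ≤ C) (hbr : b ≤ r)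
    (hrec : ∀ k, 1 ≤ k → a (k + 1) ≤ b1 * a k + b2 * discountedSum b a k + b3 * b ^ k)
    (hqr : b * (q + 1) ≤ q * r) (hCr : b1 * C + b2 * (q * C) + b3 ≤ C * r) (ha1 : a 1 ≤ C * r) :
    ∀ k, 1 ≤ k → a k ≤ C * r ^ k ∧ discountedSum b a k ≤ q * C * r ^ k := by
  have hr : 0 ≤ r := hb.trans hbr
  refine Nat.le_induction ⟨by simpa using ha1, by rw [discountedSum_one]; positivity⟩ ?_
  rintro k hk ⟨hak, hSk⟩
  have hCrk : 0 ≤ C * r ^ k := by positivity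
  constructor
  · calc a (k + 1) ≤ b1 * a k + b2 * discountedSum b a k + b3 * b ^ k := hrec k hk
      _ ≤ b1 * (C * r ^ k) + b2 * (q * C * r ^ k) + b3 * r ^ k := by gcongr
      _ = (b1 * C + b2 * (q * C) + b3) * r ^ k := by ring
      _ ≤ C * r * r ^ k := by gcongr
      _ = C * r ^ (k + 1) := by ring
  · rw [discountedSum_succ b a hk]
    calc b * (discountedSum b a k + a k) ≤ b * (q * C * r ^ k + C * r ^ k) := by gcongr
      _ = b * (q + 1) * (C * r ^ k) := by ring
      _ ≤ q * r * (C * r ^ k) := by gcongr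
      _ = q * C * r ^ (k + 1) := by ring

theorem tendsto_zero_of_le_discountedSum (ha : ∀ k, 0 ≤ a k) (hb : 0 ≤ b) (hb1 : 0 ≤ b1)
    (hb2 : 0 ≤ b2) (hb3 : 0 ≤ b3) (hq : 0 ≤ q) (hbr : b ≤ r) (hr1 : r < 1)
    (hrec : ∀ k, 1 ≤ k → a (k + 1) ≤ b1 * a k + b2 * discountedSum b a k + b3 * b ^ k)
    (hqr : b * (q + 1) ≤ q * r) (hrate : b1 + b2 * q < r) :
    Tendsto a atTop (𝓝 0) := by
  have hr : 0 < r := (by positivity : 0 ≤ b1 + b2 * q).trans_lt hrate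
  obtain ⟨C, hC, ha1, hb3C⟩ : ∃ C, 0 ≤ C ∧ a 1 ≤ C * r ∧ b3 ≤ C * (r - (b1 + b2 * q)) :=
    ((eventually_ge_atTop 0).and
      (((tendsto_id.atTop_mul_const hr).eventually_ge_atTop _).and
        ((tendsto_id.atTop_mul_const (sub_pos.2 hrate)).eventually_ge_atTop _))).exists
  have hbound := le_geometric_of_le_discountedSum hb hb1 hb2 hb3 hq hC hbr hrec hqr
    (by linarith) ha1
  have hgeom : Tendsto (fun k => C * r ^ k) atTop (𝓝 0) := by
    simpa using (tendsto_pow_atTop_nhds_zero_of_lt_one hr.le hr1).const_mul C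
  exact squeeze_zero' (.of_forall ha) (eventually_atTop.2 ⟨1, fun k hk => (hbound k hk).1⟩) hgeom

end

/-- The rate `r` solves `b1 + b2 q < r` with `q = b / (r - b)`, i.e. `b b2 < (r - b)(r - b1)`,
which holds at `r = 1` and hence just below it. -/
theorem exists_rate_lt_one {b b1 b2 : ℝ} (hb : 0 ≤ b) (hb_lt : b < 1)
    (hgap : b * b2 < (1 - b) * (1 - b1)) :
    ∃ r < 1, ∃ q, 0 ≤ q ∧ b ≤ r ∧ b * (q + 1) ≤ q * r ∧ b1 + b2 * q < r := by
  have hev : ∀ᶠ r in 𝓝[<] (1 : ℝ), r < 1 ∧ b < r ∧ b * b2 < (r - b) * (r - b1) :=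
    (eventually_nhdsWithin_of_forall fun _ hr => hr).and <| nhdsWithin_le_nhds <|
      (lt_mem_nhds hb_lt).and <| Tendsto.eventually_const_lt hgap
        (by fun_prop : Continuous fun r : ℝ => (r - b) * (r - b1)).continuousAt
  obtain ⟨r, hr1, hbr, hprod⟩ := hev.exists
  have hrb : 0 < r - b := sub_pos.2 hbr
  refine ⟨r, hr1, b / (r - b), div_nonneg hb hrb.le, hbr.le, ?_, ?_⟩
  · exact le_of_eq (by field_simp; ring)
  · rw [mul_div_assoc', ← lt_sub_iff_add_lt', div_lt_iff₀ hrb]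
    linarith

theorem stmt_1_general (a : ℕ → ℝ) (b b1 b2 b3 b4 : ℝ)
    (ha : ∀ k, 0 ≤ a k)
    (hb : 0 ≤ b) (hb1 : 0 ≤ b1) (hb2 : 0 ≤ b2) (hb3 : 0 ≤ b3)
    (hrec : ∀ k : ℕ, 1 ≤ k →
      a (k + 1) ≤ b1 * a k + b2 * ∑ i ∈ Finset.Ico 1 k, b ^ (k - i) * a i + b3 * b ^ k + b4)
    (hb1' : b < 1)
    (hgap : (1 - b) * (1 - b1) > b * b2) (hb4' : b4 = 0) :
    Filter.Tendsto a Filter.atTop (nhds 0) := by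
  obtain ⟨r, hr1, q, hq, hbr, hqr, hrate⟩ := exists_rate_lt_one hb hb1' hgap
  refine tendsto_zero_of_le_discountedSum ha hb hb1 hb2 hb3 hq hbr hr1 (fun k hk => ?_) hqr hrate
  exact (hrec k hk).trans_eq (by rw [hb4', add_zero, discountedSum])

theorem stmt_1 (a : ℕ → ℝ) (b b1 b2 b3 b4 : ℝ)
    (ha : ∀ k, 0 ≤ a k)
    (hb : 0 ≤ b) (hb1 : 0 ≤ b1) (hb2 : 0 ≤ b2) (hb3 : 0 ≤ b3) (hb4 : 0 ≤ b4)
    (hrec : ∀ k : ℕ, 1 ≤ k →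
      a (k + 1) ≤ b1 * a k + b2 * ∑ i ∈ Finset.Ico 1 k, b ^ (k - i) * a i + b3 * b ^ k + b4)
    (hb0 : 0 < b) (hb1' : b < 1)
    (hgap : (1 - b) * (1 - b1) > b * b2) (hb4' : b4 = 0) :
    Filter.Tendsto a Filter.atTop (nhds 0) :=
  stmt_1_general a b b1 b2 b3 b4 ha hb hb1 hb2 hb3 hrec hb1' hgap hb4'
end

section
/- Let {a(k)} be a nonnegative sequence with a(k+1) ≤ b1·a(k) + b2·∑_{i=1}^{k-1} b^{k-i}·a(i) + b3·b^k + b4 for all k ≥ 1, where b, b1, b2, b3, b4 ≥ 0, 0 < b < 1 and (1-b)(1-b1) > b·b2. Then the sequence {a(k)} is bounded above. -/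
/-!
Let `g = (1 - b)(1 - b1) - b b2 > 0`. Any `M ≥ 0` dominating `a 0`, `a 1` and
`(b3 + b4)(1 - b) / g` is an invariant ceiling: if `a i ≤ M` for all `i ≤ k`, the geometric
weights `b ^ (k - i)` sum to at most `b / (1 - b)`, so
`a (k + 1) ≤ (b1 + b2 b / (1 - b)) M + b3 + b4 ≤ M`.
-/

open Finset

lemma sum_Ico_one_pow_sub_le {b : ℝ} (hb : 0 ≤ b) (hb1 : b < 1) (k : ℕ) :
    ∑ i ∈ Ico 1 k, b ^ (k - i) ≤ b / (1 - b) := by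
  rw [sum_Ico_reflect (b ^ ·) 1 (Nat.le_succ k), Nat.add_sub_cancel, Nat.add_sub_cancel_left]
  simpa using geom_sum_Ico_le_of_lt_one (m := 1) (n := k) hb hb1

lemma sum_Ico_one_pow_sub_mul_le {a : ℕ → ℝ} {b M : ℝ} (hb : 0 ≤ b) (hb1 : b < 1)
    (hM : 0 ≤ M) {k : ℕ} (ha : ∀ i < k, a i ≤ M) :
    ∑ i ∈ Ico 1 k, b ^ (k - i) * a i ≤ b / (1 - b) * M :=
  calc ∑ i ∈ Ico 1 k, b ^ (k - i) * a i
      ≤ ∑ i ∈ Ico 1 k, b ^ (k - i) * M :=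
        sum_le_sum fun i hi => by gcongr; exact ha i (mem_Ico.1 hi).2
    _ = (∑ i ∈ Ico 1 k, b ^ (k - i)) * M := by rw [sum_mul]
    _ ≤ b / (1 - b) * M := by gcongr; exact sum_Ico_one_pow_sub_le hb hb1 k

lemma add_mul_add_le_of_gap {b b1 b2 c M : ℝ} (hb1 : b < 1)
    (h : c * (1 - b) ≤ ((1 - b) * (1 - b1) - b * b2) * M) :
    b1 * M + b2 * (b / (1 - b) * M) + c ≤ M := by
  have h1b : 0 < 1 - b := sub_pos.2 hb1
  have hdiff : M - (b1 * M + b2 * (b / (1 - b) * M) + c)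
      = (((1 - b) * (1 - b1) - b * b2) * M - c * (1 - b)) / (1 - b) := by
    field_simp
    ring
  have := div_nonneg (sub_nonneg.2 h) h1b.le
  linarith

theorem stmt_2_general (a : ℕ → ℝ) (b b1 b2 b3 b4 : ℝ)
    (ha : ∀ k, 0 ≤ a k)
    (hb : 0 ≤ b) (hb1 : 0 ≤ b1) (hb2 : 0 ≤ b2) (hb3 : 0 ≤ b3)
    (hrec : ∀ k : ℕ, 1 ≤ k →
      a (k + 1) ≤ b1 * a k + b2 * ∑ i ∈ Finset.Ico 1 k, b ^ (k - i) * a i + b3 * b ^ k + b4)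
    (hb1' : b < 1)
    (hgap : (1 - b) * (1 - b1) > b * b2) :
    ∃ M : ℝ, ∀ k, a k ≤ M := by
  set g := (1 - b) * (1 - b1) - b * b2
  have hg : 0 < g := sub_pos.2 hgap
  set M := max (max (a 0) (a 1)) ((b3 + b4) * (1 - b) / g)
  have ha0 : a 0 ≤ M := (le_max_left _ _).trans (le_max_left _ _)
  have ha1 : a 1 ≤ M := (le_max_right _ _).trans (le_max_left _ _)
  have hM : 0 ≤ M := (ha 0).trans ha0
  have hinv : b1 * M + b2 * (b / (1 - b) * M) + (b3 + b4) ≤ M :=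
    add_mul_add_le_of_gap hb1' (by rw [mul_comm g]; exact (div_le_iff₀ hg).1 (le_max_right _ _))
  refine ⟨M, fun k => ?_⟩
  induction k using Nat.strong_induction_on with
  | _ k ih =>
    match k with
    | 0 => exact ha0
    | 1 => exact ha1
    | n + 2 =>
      have hsum := sum_Ico_one_pow_sub_mul_le hb hb1' hM (a := a) (k := n + 1)
        fun i hi => ih i (by omega)
      have hpow : b ^ (n + 1) ≤ 1 := pow_le_one₀ hb hb1'.le
      calc a (n + 2)
          ≤ b1 * a (n + 1) + b2 * ∑ i ∈ Ico 1 (n + 1), b ^ (n + 1 - i) * a i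
              + b3 * b ^ (n + 1) + b4 := hrec (n + 1) (by omega)
        _ ≤ b1 * M + b2 * (b / (1 - b) * M) + b3 * 1 + b4 := by
          gcongr
          exact ih (n + 1) (by omega)
        _ ≤ M := by linarith

theorem stmt_2 (a : ℕ → ℝ) (b b1 b2 b3 b4 : ℝ)
    (ha : ∀ k, 0 ≤ a k)
    (hb : 0 ≤ b) (hb1 : 0 ≤ b1) (hb2 : 0 ≤ b2) (hb3 : 0 ≤ b3) (hb4 : 0 ≤ b4)
    (hrec : ∀ k : ℕ, 1 ≤ k →
      a (k + 1) ≤ b1 * a k + b2 * ∑ i ∈ Finset.Ico 1 k, b ^ (k - i) * a i + b3 * b ^ k + b4)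
    (hb0 : 0 < b) (hb1' : b < 1)
    (hgap : (1 - b) * (1 - b1) > b * b2) :
    ∃ M : ℝ, ∀ k, a k ≤ M :=
  stmt_2_general a b b1 b2 b3 b4 ha hb hb1 hb2 hb3 hrec hb1' hgap
end

section
/- Let A be an m×n real matrix satisfying the RIP of order t with constant δ_t < 1, and let μ > 0. For any vectors p, q ∈ ℝⁿ with |supp(p) ∪ supp(q)| ≤ t, one has |⟨p, (I − μAᵀA)q⟩| ≤ (|μ−1| + μδ_t)·‖p‖₂·‖q‖₂. -/
open Finset Matrix

/-- Euclidean norm of a finitely-indexed real vector. -/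
noncomputable def nrm {ι : Type*} [Fintype ι] (x : ι → ℝ) : ℝ :=
  Real.sqrt (∑ i, x i ^ 2)

open Classical in
/-- Support of a vector as a finite set of indices. -/
noncomputable def spt {n : ℕ} (x : Fin n → ℝ) : Finset (Fin n) :=
  Finset.univ.filter fun i => x i ≠ 0

/-- Restriction of a vector to an index set: keep entries in `U`, zero the rest. -/
def restr {n : ℕ} (x : Fin n → ℝ) (U : Finset (Fin n)) : Fin n → ℝ :=
  fun i => if i ∈ U then x i else 0

/-- `A` satisfies the RIP of order `t` with constant `δ`. -/
def RIP {m n : ℕ} (A : Matrix (Fin m) (Fin n) ℝ) (t : ℕ) (δ : ℝ) : Prop :=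
  ∀ x : Fin n → ℝ, (spt x).card ≤ t →
    (1 - δ) * nrm x ^ 2 ≤ nrm (A.mulVec x) ^ 2 ∧
      nrm (A.mulVec x) ^ 2 ≤ (1 + δ) * nrm x ^ 2

/-!
Expanding the quadratic form, `⟨p, (I - μAᵀA)q⟩ = (1 - μ)⟨p, q⟩ + μ(⟨p, q⟩ - ⟨Ap, Aq⟩)`.
The first term is bounded by Cauchy–Schwarz. For the second, polarization turns the RIP
bounds on `u ± v` (whose supports lie in `supp p ∪ supp q`) into
`|⟨Au, Av⟩ - ⟨u, v⟩| ≤ δ (‖u‖² + ‖v‖²) / 2`; applied to `u = ‖q‖ p`, `v = ‖p‖ q` this gives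
`|⟨Ap, Aq⟩ - ⟨p, q⟩| ≤ δ ‖p‖ ‖q‖`.
-/

section Norm

variable {ι : Type*} [Fintype ι]

lemma nrm_nonneg (x : ι → ℝ) : 0 ≤ nrm x := Real.sqrt_nonneg _

lemma nrm_sq (x : ι → ℝ) : nrm x ^ 2 = x ⬝ᵥ x := by
  rw [nrm, Real.sq_sqrt (sum_nonneg fun i _ => sq_nonneg _)]
  simp only [dotProduct, sq]

lemma nrm_eq_zero_iff {x : ι → ℝ} : nrm x = 0 ↔ x = 0 := by
  rw [← dotProduct_self_eq_zero, ← nrm_sq, sq_eq_zero_iff]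

lemma nrm_neg (x : ι → ℝ) : nrm (-x) = nrm x := by
  simp only [nrm, Pi.neg_apply, neg_sq]

lemma nrm_smul (c : ℝ) (x : ι → ℝ) : nrm (c • x) = |c| * nrm x := by
  simp only [nrm, Pi.smul_apply, smul_eq_mul, mul_pow, ← mul_sum, Real.sqrt_mul (sq_nonneg c),
    Real.sqrt_sq_eq_abs]

lemma abs_dotProduct_le_nrm_mul_nrm (x y : ι → ℝ) : |x ⬝ᵥ y| ≤ nrm x * nrm y := by
  have h (x : ι → ℝ) : x ⬝ᵥ y ≤ nrm x * nrm y := Real.sum_mul_le_sqrt_mul_sqrt _ x y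
  refine abs_le.2 ⟨neg_le.1 ?_, h x⟩
  simpa [nrm_neg] using h (-x)

end Norm

section Support

variable {n : ℕ}

lemma mem_spt {x : Fin n → ℝ} {i : Fin n} : i ∈ spt x ↔ x i ≠ 0 := by
  simp [spt]

lemma spt_add_subset (x y : Fin n → ℝ) : spt (x + y) ⊆ spt x ∪ spt y := by
  intro i
  simp only [mem_union, mem_spt, Pi.add_apply]
  contrapose!
  rintro ⟨hx, hy⟩
  simp [hx, hy]

lemma spt_smul_subset (c : ℝ) (x : Fin n → ℝ) : spt (c • x) ⊆ spt x := by
  intro i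
  simp only [mem_spt, Pi.smul_apply, smul_eq_mul]
  exact right_ne_zero_of_mul

lemma spt_sub_subset (x y : Fin n → ℝ) : spt (x - y) ⊆ spt x ∪ spt y := by
  simpa only [sub_eq_add_neg, neg_one_smul] using
    (spt_add_subset x ((-1 : ℝ) • y)).trans (union_subset_union_right (spt_smul_subset _ y))

end Support

namespace RIP

variable {m n t : ℕ} {A : Matrix (Fin m) (Fin n) ℝ} {δ : ℝ}

lemma abs_dotProduct_sub_le_sq (hRIP : RIP A t δ) {u v : Fin n → ℝ}
    (h : (spt u ∪ spt v).card ≤ t) :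
    |(A *ᵥ u) ⬝ᵥ (A *ᵥ v) - u ⬝ᵥ v| ≤ δ * (nrm u ^ 2 + nrm v ^ 2) / 2 := by
  obtain ⟨hadd_lower, hadd_upper⟩ := hRIP (u + v) ((card_le_card (spt_add_subset u v)).trans h)
  obtain ⟨hsub_lower, hsub_upper⟩ := hRIP (u - v) ((card_le_card (spt_sub_subset u v)).trans h)
  simp only [nrm_sq, mulVec_add, mulVec_sub, dotProduct_add, add_dotProduct, dotProduct_sub,
    sub_dotProduct, dotProduct_comm v u, dotProduct_comm (A *ᵥ v) (A *ᵥ u)]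
    at hadd_lower hadd_upper hsub_lower hsub_upper ⊢
  rw [abs_le]
  constructor <;> linarith

lemma abs_dotProduct_sub_le (hRIP : RIP A t δ) (x y : Fin n → ℝ)
    (h : (spt x ∪ spt y).card ≤ t) :
    |(A *ᵥ x) ⬝ᵥ (A *ᵥ y) - x ⬝ᵥ y| ≤ δ * nrm x * nrm y := by
  rcases (nrm_nonneg x).eq_or_lt with hx | hx
  · simp [nrm_eq_zero_iff.1 hx.symm, nrm]
  rcases (nrm_nonneg y).eq_or_lt with hy | hy
  · simp [nrm_eq_zero_iff.1 hy.symm, nrm]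
  have hscaled := hRIP.abs_dotProduct_sub_le_sq (u := nrm y • x) (v := nrm x • y)
    ((card_le_card (union_subset_union (spt_smul_subset _ x) (spt_smul_subset _ y))).trans h)
  simp only [mulVec_smul, dotProduct_smul, smul_dotProduct, smul_eq_mul, nrm_smul,
    abs_of_pos hx, abs_of_pos hy] at hscaled
  have hxy : 0 < nrm x * nrm y := mul_pos hx hy
  have hfactored : |(nrm x * nrm y) * ((A *ᵥ x) ⬝ᵥ (A *ᵥ y) - x ⬝ᵥ y)|
      ≤ (nrm x * nrm y) * (δ * nrm x * nrm y) := by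
    convert hscaled using 2 <;> ring
  rw [abs_mul, abs_of_pos hxy] at hfactored
  exact le_of_mul_le_mul_left hfactored hxy

end RIP

lemma dotProduct_sub_smul_transpose_mulVec_mulVec {R m n : Type*} [CommRing R] [Fintype m]
    [Fintype n] (A : Matrix m n R) (μ : R) (p q : n → R) :
    p ⬝ᵥ (q - μ • Aᵀ *ᵥ (A *ᵥ q)) = (1 - μ) * p ⬝ᵥ q + μ * (p ⬝ᵥ q - (A *ᵥ p) ⬝ᵥ (A *ᵥ q)) := by
  rw [dotProduct_sub, dotProduct_smul, dotProduct_mulVec, vecMul_transpose, smul_eq_mul]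
  ring

theorem stmt_5_general {m n : ℕ} (A : Matrix (Fin m) (Fin n) ℝ) (t : ℕ) (δ : ℝ)
    (hRIP : RIP A t δ) (μ : ℝ) (hμ : 0 < μ)
    (p q : Fin n → ℝ) (hsupp : (spt p ∪ spt q).card ≤ t) :
    abs (∑ i, p i * (q - μ • Matrix.mulVec Aᵀ (A.mulVec q)) i) ≤
      (|μ - 1| + μ * δ) * nrm p * nrm q := by
  have hcs := abs_dotProduct_le_nrm_mul_nrm p q
  have hrip := hRIP.abs_dotProduct_sub_le p q hsupp
  change |p ⬝ᵥ (q - μ • Aᵀ *ᵥ (A *ᵥ q))| ≤ _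
  rw [dotProduct_sub_smul_transpose_mulVec_mulVec]
  calc |(1 - μ) * p ⬝ᵥ q + μ * (p ⬝ᵥ q - (A *ᵥ p) ⬝ᵥ (A *ᵥ q))|
      ≤ |(1 - μ) * p ⬝ᵥ q| + |μ * (p ⬝ᵥ q - (A *ᵥ p) ⬝ᵥ (A *ᵥ q))| := abs_add_le _ _
    _ = |μ - 1| * |p ⬝ᵥ q| + μ * |(A *ᵥ p) ⬝ᵥ (A *ᵥ q) - p ⬝ᵥ q| := by
        rw [abs_mul, abs_mul, abs_of_pos hμ, abs_sub_comm 1 μ, abs_sub_comm (p ⬝ᵥ q)]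
    _ ≤ |μ - 1| * (nrm p * nrm q) + μ * (δ * nrm p * nrm q) := by gcongr
    _ = (|μ - 1| + μ * δ) * nrm p * nrm q := by ring

theorem stmt_5 {m n : ℕ} (A : Matrix (Fin m) (Fin n) ℝ) (t : ℕ) (δ : ℝ)
    (hRIP : RIP A t δ) (hδ : δ < 1) (μ : ℝ) (hμ : 0 < μ)
    (p q : Fin n → ℝ) (hsupp : (spt p ∪ spt q).card ≤ t) :
    abs (∑ i, p i * (q - μ • Matrix.mulVec Aᵀ (A.mulVec q)) i) ≤
      (|μ - 1| + μ * δ) * nrm p * nrm q :=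
  stmt_5_general A t δ hRIP μ hμ p q hsupp
end

section
/- For τ > 0, β > 0 and a fixed vector w ∈ ℝⁿ, every vector of the form hard(w, √(2τ/β)) (setting entries with |w_i| ≤ √(2τ/β) to zero and keeping entries with |w_i| > √(2τ/β)) is a minimizer over x ∈ ℝⁿ of the function x ↦ ‖x‖₀ + (β/(2τ))‖x − w‖₂². -/
/-!
The objective separates over coordinates, so it suffices to minimise
`t ↦ [t ≠ 0] + c (t - a)²` for each scalar `a`, where `c = β / (2τ)` and `c θ² = 1`.
The only candidates are `t = 0`, of value `c a²`, and `t = a`, of value `1`;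
hard thresholding at `θ` picks the smaller of the two.
-/

open Finset

noncomputable def hardThreshold (θ a : ℝ) : ℝ := if θ < |a| then a else 0

lemma l0_add_mul_sq_hardThreshold_le {c θ : ℝ} (hθ : 0 ≤ θ) (hcθ : c * θ ^ 2 = 1) (a t : ℝ) :
    (if hardThreshold θ a ≠ 0 then 1 else 0) + c * (hardThreshold θ a - a) ^ 2 ≤
      (if t ≠ 0 then 1 else 0) + c * (t - a) ^ 2 := by
  have hc : 0 < c := by
    by_contra! hc
    nlinarith [sq_nonneg θ]
  have hsq : θ ^ 2 < a ^ 2 ↔ θ < |a| := by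
    rw [← sq_abs a]
    exact pow_lt_pow_iff_left₀ hθ (abs_nonneg a) two_ne_zero
  unfold hardThreshold
  by_cases hthr : θ < |a|
  · have ha : a ≠ 0 := by
      rintro rfl
      exact absurd hthr (by simpa using hθ)
    have hlt : c * θ ^ 2 < c * a ^ 2 := mul_lt_mul_of_pos_left (hsq.mpr hthr) hc
    rw [if_pos hthr, if_pos ha, sub_self]
    by_cases ht : t = 0
    · rw [if_neg (not_not.mpr ht), ht]
      linarith
    · rw [if_pos ht]
      nlinarith [sq_nonneg (t - a)]
  · have hle : c * a ^ 2 ≤ c * θ ^ 2 :=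
      mul_le_mul_of_nonneg_left (not_lt.mp (hsq.not.mpr hthr)) hc.le
    rw [if_neg hthr, if_neg (not_not.mpr rfl)]
    by_cases ht : t = 0
    · rw [if_neg (not_not.mpr ht), ht]
    · rw [if_pos ht]
      nlinarith [sq_nonneg (t - a)]

lemma card_filter_ne_zero_add_mul_sum {ι : Type*} [Fintype ι] (c : ℝ) (x w : ι → ℝ) :
    ((univ.filter fun i => x i ≠ 0).card : ℝ) + c * ∑ i, (x i - w i) ^ 2 =
      ∑ i, ((if x i ≠ 0 then 1 else 0) + c * (x i - w i) ^ 2) := by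
  rw [sum_add_distrib, ← mul_sum, card_filter]
  push_cast
  rfl

open Classical in
theorem stmt_15 {n : ℕ} (τ β : ℝ) (hτ : 0 < τ) (hβ : 0 < β) (w : Fin n → ℝ) :
    let θ : ℝ := Real.sqrt (2 * τ / β)
    let hw : Fin n → ℝ := fun i => if θ < |w i| then w i else 0
    ∀ x : Fin n → ℝ,
      ((Finset.univ.filter fun i => hw i ≠ 0).card : ℝ)
          + (β / (2 * τ)) * ∑ i, (hw i - w i) ^ 2 ≤
        ((Finset.univ.filter fun i => x i ≠ 0).card : ℝ)
          + (β / (2 * τ)) * ∑ i, (x i - w i) ^ 2 := by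
  intro θ hw x
  have hcθ : β / (2 * τ) * θ ^ 2 = 1 := by
    rw [Real.sq_sqrt (by positivity)]
    field_simp
  rw [card_filter_ne_zero_add_mul_sum, card_filter_ne_zero_add_mul_sum]
  exact sum_le_sum fun i _ =>
    l0_add_mul_sq_hardThreshold_le (Real.sqrt_nonneg _) hcθ (w i) (x i)
end

section
/- Let c : ℕ → ℝᵐ and r : ℕ → ℝᵐ satisfy r(1) = (γ/(1+γ))·c(0) and r(k+2) − (1/(1+γ))·r(k+1) = (γ/(1+γ))·(2c(k+1) − c(k)) for all k ≥ 0, where γ > 0. Then for all k ≥ 1, r(k+1) = (2γ/(1+γ))·c(k) + ∑_{i=1}^{k-1} (γ(1−γ)/(1+γ)^{k+1−i})·c(i) − (γ²/(1+γ)^{k+1})·c(0). -/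
/-!
The closed form satisfies the same recurrence as `r` from `k = 1` on: passing from `k` to `k + 1`
divides the coefficients of `c 0, …, c (k - 1)` by `1 + γ`, and the forcing term
`γ / (1 + γ) • (2 • c (k + 1) - c k)` supplies the coefficients of `c k` and `c (k + 1)`.
-/

open Finset

section

variable {𝕜 E : Type*} [Field 𝕜] [AddCommGroup E] [Module 𝕜 E]

def admmClosedForm (γ : 𝕜) (c : ℕ → E) (k : ℕ) : E :=
  (2 * γ / (1 + γ)) • c k
    + ∑ i ∈ Ico 1 k, (γ * (1 - γ) / (1 + γ) ^ (k + 1 - i)) • c i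
    - (γ ^ 2 / (1 + γ) ^ (k + 1)) • c 0

variable {γ : 𝕜} (hγ : 1 + γ ≠ 0) (c : ℕ → E)
include hγ

theorem admmClosedForm_one :
    admmClosedForm γ c 1 =
      (1 / (1 + γ)) • ((γ / (1 + γ)) • c 0) + (γ / (1 + γ)) • (2 • c 1 - c 0) := by
  simp only [admmClosedForm, Ico_self, sum_empty, add_zero]
  match_scalars <;> field_simp
  all_goals ring

theorem admmClosedForm_succ {k : ℕ} (hk : 1 ≤ k) :
    admmClosedForm γ c (k + 1) =
      (1 / (1 + γ)) • admmClosedForm γ c k + (γ / (1 + γ)) • (2 • c (k + 1) - c k) := by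
  have hshift : ∀ i ∈ Ico 1 k, (γ * (1 - γ) / (1 + γ) ^ (k + 1 + 1 - i)) • c i
      = (1 / (1 + γ)) • ((γ * (1 - γ) / (1 + γ) ^ (k + 1 - i)) • c i) := by
    intro i hi
    rw [show k + 1 + 1 - i = k + 1 - i + 1 by grind, smul_smul, pow_succ]
    field_simp
  simp only [admmClosedForm]
  rw [sum_Ico_succ_top hk, sum_congr rfl hshift, ← smul_sum,
    show k + 1 + 1 - k = 2 by omega]
  match_scalars <;> field_simp
  all_goals ring

end

theorem stmt_16 {m : ℕ} (γ : ℝ) (hγ : 0 < γ) (c r : ℕ → (Fin m → ℝ))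
    (h1 : r 1 = (γ / (1 + γ)) • c 0)
    (hrec : ∀ k : ℕ, r (k + 2) - (1 / (1 + γ)) • r (k + 1) =
      (γ / (1 + γ)) • (2 • c (k + 1) - c k)) :
    ∀ k : ℕ, 1 ≤ k →
      r (k + 1) = (2 * γ / (1 + γ)) • c k
        + ∑ i ∈ Finset.Ico 1 k, (γ * (1 - γ) / (1 + γ) ^ (k + 1 - i)) • c i
        - (γ ^ 2 / (1 + γ) ^ (k + 1)) • c 0 := by
  have hne : 1 + γ ≠ 0 := by positivity
  have hstep : ∀ k, r (k + 2) =
      (1 / (1 + γ)) • r (k + 1) + (γ / (1 + γ)) • (2 • c (k + 1) - c k) :=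
    fun k => sub_eq_iff_eq_add'.mp (hrec k)
  intro k hk
  show r (k + 1) = admmClosedForm γ c k
  induction k, hk using Nat.le_induction with
  | base => rw [hstep, h1, admmClosedForm_one hne]
  | succ k hk ih => rw [hstep, ih, admmClosedForm_succ hne c hk]
end
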